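/- For a partition ν = (1^{n₁}, 2^{n₂}, ..., r^{n_r}) with |ν| = ∑ i·n_i, the dimension of the space of S_m-invariants in the tensor product (IE₁^m)^{⊗n₁} ⊗ ⋯ ⊗ (IE_r^m)^{⊗n_r} is constant for all m ≥ |ν|. -/

import Mathlib

/-- Injective `ℓ`-tuples of elements of `Fin m`. -/
def Tup (ℓ m : ℕ) : Type := {f : Fin ℓ → Fin m // Function.Injective f}

/-- Two injective tuples are related iff one is a cyclic rotation of the other. -/
def cycRel (ℓ m : ℕ) [NeZero ℓ] (a b : Tup ℓ m) : Prop :=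
  ∃ k : Fin ℓ, ∀ i, b.1 i = a.1 (i + k)

/-- The set `Γ_ℓ^m` of `ℓ`-cycles of `[1, m]`: injective `ℓ`-tuples of elements
of `{1, …, m}` modulo cyclic rotation. -/
def Cyc (ℓ m : ℕ) [NeZero ℓ] : Type := Quot (cycRel ℓ m)

/-- The coordinatewise action of `S_m` on the set of `ℓ`-cycles of `[1, m]`. -/
instance {ℓ m : ℕ} [NeZero ℓ] : MulAction (Equiv.Perm (Fin m)) (Cyc ℓ m) where
  smul g := Quot.map (fun f => ⟨g ∘ f.1, (Equiv.injective g).comp f.2⟩)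
    (by rintro a b ⟨k, hk⟩; exact ⟨k, fun i => congrArg g (hk i)⟩)
  one_smul := by rintro ⟨a⟩; rfl
  mul_smul := by rintro g h ⟨a⟩; rfl

/-!
A point of `∏ Γ_ℓ^m` is given by labelling the `|ν|` slots of the cycles with elements of
`[1, m]`, injectively on each cycle, and two labellings give the same point iff they differ by
rotations of the cycles. Labellings lie in one `S_m`-orbit iff they have the same kernel, so the
`S_m`-orbits on `∏ Γ_ℓ^m` are the kernels of such labellings up to rotation. For `m ≥ |ν|` every
equivalence relation on the slots that separates the slots of each cycle is such a kernel, so the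
orbits are in bijection with a set independent of `m`. Finally, the invariants of a permutation
representation are the functions constant on orbits, so their dimension is the number of orbits.
-/

open Function MulAction

namespace Representation

variable (k G X : Type*) [CommRing k] [Group G] [MulAction G X]

theorem coeff_smul_eq_of_mem_invariants_ofMulAction {v : MonoidAlgebra k X}
    (hv : v ∈ (ofMulAction k G X).invariants) (g : G) (x : X) :
    v.coeff (g • x) = v.coeff x :=
  calc v.coeff (g • x) = (ofMulAction k G X g v).coeff (g • x) := by rw [hv g]
    _ = v.coeff x := by rw [coeff_ofMulAction, inv_smul_smul]

noncomputable def invariantsOfMulActionEquiv [Finite X] :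
    (ofMulAction k G X).invariants ≃ₗ[k] (orbitRel.Quotient G X → k) where
  toFun v ω := v.1.coeff ω.out
  map_add' v w := by ext; simp
  map_smul' c v := by ext; simp
  invFun c := ⟨MonoidAlgebra.ofCoeff (Finsupp.equivFunOnFinite.symm (c ∘ Quotient.mk _)), by
    intro g
    apply MonoidAlgebra.coeff_injective
    ext x
    simp [coeff_ofMulAction]⟩
  left_inv v := by
    apply Subtype.ext
    apply MonoidAlgebra.coeff_injective
    ext x
    obtain ⟨g, hg⟩ := Quotient.mk_out (s := orbitRel G X) x
    simp [← hg, coeff_smul_eq_of_mem_invariants_ofMulAction k G X v.2]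
  right_inv c := by
    ext ω
    simp

theorem finrank_invariants_ofMulAction [Nontrivial k] [Finite X] :
    Module.finrank k (ofMulAction k G X).invariants = Nat.card (orbitRel.Quotient G X) := by
  have : Fintype (orbitRel.Quotient G X) := Fintype.ofFinite _
  rw [(invariantsOfMulActionEquiv k G X).finrank_eq, Module.finrank_fintype_fun_eq_card,
    Nat.card_eq_fintype_card]

end Representation

theorem Equiv.Perm.exists_comp_eq_of_ker_eq {α β : Type*} [Finite α] {f g : α → β}
    (h : Setoid.ker f = Setoid.ker g) : ∃ σ : Perm β, σ ∘ f = g := by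
  let g' : Quotient (Setoid.ker f) → β := Quotient.lift g fun a b hab => by
    rwa [h] at hab
  have hg' : Injective g' := by
    rintro ⟨a⟩ ⟨b⟩ hab
    exact Quotient.sound (h ▸ hab : Setoid.ker f a b)
  obtain ⟨σ, hσ⟩ := Perm.exists_extending_pair _ g' (Setoid.kerLift_injective f) hg'
  exact ⟨σ, funext fun a => hσ ⟦a⟧⟩

theorem Setoid.ker_perm_comp {α β : Type*} (σ : Equiv.Perm β) (f : α → β) :
    Setoid.ker (σ ∘ f) = Setoid.ker f :=
  Setoid.ext fun _ _ => σ.injective.eq_iff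

theorem Setoid.exists_ker_eq_of_card_le {α : Type*} [Finite α] (S : Setoid α) {m : ℕ}
    (h : Nat.card α ≤ m) : ∃ f : α → Fin m, Setoid.ker f = S := by
  have hS : Nat.card (Quotient S) ≤ m :=
    (Nat.card_le_card_of_surjective _ Quotient.mk_surjective).trans h
  refine ⟨Fin.castLEEmb hS ∘ Finite.equivFin _ ∘ Quotient.mk S, Setoid.ext fun a b => ?_⟩
  simp [Setoid.ker_def, Quotient.eq]

theorem Nat.card_eq_of_surjective_of_ker_eq {Y A B : Type*} {p : Y → A} {q : Y → B}
    (hp : Surjective p) (hq : Surjective q) (h : Setoid.ker p = Setoid.ker q) :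
    Nat.card A = Nat.card B :=
  Nat.card_congr <| (Setoid.quotientKerEquivOfSurjective p hp).symm.trans <|
    (Quotient.congrRight fun a b => by rw [h]).trans (Setoid.quotientKerEquivOfSurjective q hq)

theorem cycRel_equivalence (ℓ m : ℕ) [NeZero ℓ] : Equivalence (cycRel ℓ m) where
  refl _ := ⟨0, fun i => by rw [add_zero]⟩
  symm := by
    rintro a b ⟨k, hk⟩
    exact ⟨-k, fun i => by rw [hk, neg_add_cancel_right]⟩
  trans := by
    rintro a b c ⟨k₁, h₁⟩ ⟨k₂, h₂⟩
    exact ⟨k₂ + k₁, fun i => by rw [h₂, h₁, add_assoc]⟩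

def Cyc.mk {ℓ m : ℕ} [NeZero ℓ] (a : Tup ℓ m) : Cyc ℓ m := Quot.mk _ a

theorem Cyc.mk_eq_mk_iff {ℓ m : ℕ} [NeZero ℓ] {a b : Tup ℓ m} :
    Cyc.mk a = Cyc.mk b ↔ cycRel ℓ m a b :=
  Quot.eq.trans (cycRel_equivalence ℓ m).eqvGen_iff

instance (ℓ m : ℕ) : Finite (Tup ℓ m) := Subtype.finite

instance (ℓ m : ℕ) [NeZero ℓ] : Finite (Cyc ℓ m) := Quot.finite _

namespace CycleTuples

variable (r : ℕ) (n : Fin r → ℕ)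

/-- `⟨i, (j, k)⟩` is position `k` of the `j`-th cycle of length `i + 1`. -/
abbrev Slot : Type := Σ i : Fin r, Fin (n i) × Fin ((i : ℕ) + 1)

abbrev Rotation : Type := ∀ i : Fin r, Fin (n i) → Fin ((i : ℕ) + 1)

variable {r n}

def rotate (ρ : Rotation r n) (a : Slot r n) : Slot r n :=
  ⟨a.1, (a.2.1, a.2.2 + ρ a.1 a.2.1)⟩

@[simp] theorem rotate_zero : rotate (0 : Rotation r n) = id := by
  funext ⟨i, j, k⟩; simp [rotate]

theorem rotate_add (ρ ρ' : Rotation r n) : rotate (ρ + ρ') = rotate ρ' ∘ rotate ρ := by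
  funext ⟨i, j, k⟩
  show (⟨i, (j, k + (ρ i j + ρ' i j))⟩ : Slot r n) = ⟨i, (j, k + ρ i j + ρ' i j)⟩
  rw [add_assoc]

def BlockInjective (S : Setoid (Slot r n)) : Prop :=
  ∀ (i : Fin r) (j : Fin (n i)) (k k' : Fin ((i : ℕ) + 1)), S ⟨i, (j, k)⟩ ⟨i, (j, k')⟩ → k = k'

def Rotated (S S' : {S : Setoid (Slot r n) // BlockInjective S}) : Prop :=
  ∃ ρ : Rotation r n, S'.1 = S.1.comap (rotate ρ)

theorem rotated_equivalence : Equivalence (@Rotated r n) where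
  refl S := ⟨0, by simp⟩
  symm := by
    rintro S S' ⟨ρ, h⟩
    refine ⟨-ρ, ?_⟩
    rw [h, ← Setoid.comap_comp, ← rotate_add, neg_add_cancel, rotate_zero, Setoid.comap_id]
  trans := by
    rintro S S' S'' ⟨ρ, h⟩ ⟨ρ', h'⟩
    exact ⟨ρ' + ρ, by rw [h', h, rotate_add, Setoid.comap_comp]⟩

variable (r n) in
abbrev Pattern : Type := Quot (@Rotated r n)

variable (m : ℕ)

variable (r n) in
abbrev Labeling : Type := {f : Slot r n → Fin m // BlockInjective (Setoid.ker f)}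

variable {m}

def Labeling.block (f : Labeling r n m) (i : Fin r) (j : Fin (n i)) : Tup ((i : ℕ) + 1) m :=
  ⟨fun k => f.1 ⟨i, (j, k)⟩, fun k k' => f.2 i j k k'⟩

def toCycles (f : Labeling r n m) : ∀ i : Fin r, Fin (n i) → Cyc ((i : ℕ) + 1) m :=
  fun i j => Cyc.mk (f.block i j)

theorem toCycles_surjective : Surjective (toCycles (r := r) (n := n) (m := m)) := by
  intro x
  refine ⟨⟨fun a => (x a.1 a.2.1).out.1 a.2.2, fun i j => (x i j).out.2⟩, ?_⟩
  funext i j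
  exact Quot.out_eq (x i j)

theorem toCycles_eq_toCycles_iff (f g : Labeling r n m) :
    toCycles g = toCycles f ↔ ∃ ρ : Rotation r n, f.1 = g.1 ∘ rotate ρ := by
  simp only [funext_iff, toCycles, Cyc.mk_eq_mk_iff]
  simp only [cycRel, Labeling.block, Classical.skolem, Sigma.forall,
    Prod.forall, rotate, comp_apply]

theorem smul_toCycles (σ : Equiv.Perm (Fin m)) (f : Labeling r n m) :
    σ • toCycles f = toCycles ⟨σ ∘ f.1, by rw [Setoid.ker_perm_comp]; exact f.2⟩ :=
  rfl

def Labeling.pattern (f : Labeling r n m) : Pattern r n := Quot.mk _ ⟨Setoid.ker f.1, f.2⟩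

theorem mk_toCycles_eq_mk_toCycles_iff (f g : Labeling r n m) :
    (⟦toCycles f⟧ : orbitRel.Quotient (Equiv.Perm (Fin m)) _) = ⟦toCycles g⟧ ↔
      f.pattern = g.pattern := by
  rw [Quotient.eq, orbitRel_apply, mem_orbit_iff, eq_comm (a := f.pattern), Labeling.pattern,
    Labeling.pattern, Quot.eq, rotated_equivalence.eqvGen_iff]
  simp only [smul_toCycles, toCycles_eq_toCycles_iff, Rotated]
  rw [exists_comm]
  refine exists_congr fun ρ => ⟨?_, fun h => ?_⟩
  · rintro ⟨σ, hσ⟩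
    rw [hσ, comp_assoc, Setoid.ker_perm_comp]
    rfl
  · obtain ⟨σ, hσ⟩ := Equiv.Perm.exists_comp_eq_of_ker_eq (f := g.1 ∘ rotate ρ) h.symm
    exact ⟨σ, hσ.symm⟩

theorem Labeling.pattern_surjective (hm : Nat.card (Slot r n) ≤ m) :
    Surjective (Labeling.pattern (r := r) (n := n) (m := m)) := by
  rintro ⟨S, hS⟩
  obtain ⟨f, hf⟩ := S.exists_ker_eq_of_card_le hm
  exact ⟨⟨f, hf ▸ hS⟩, congrArg (Quot.mk _) (Subtype.ext hf)⟩

theorem card_orbits_eq_card_pattern (hm : Nat.card (Slot r n) ≤ m) :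
    Nat.card (orbitRel.Quotient (Equiv.Perm (Fin m))
        (∀ i : Fin r, Fin (n i) → Cyc ((i : ℕ) + 1) m)) = Nat.card (Pattern r n) :=
  Nat.card_eq_of_surjective_of_ker_eq (Quotient.mk_surjective.comp toCycles_surjective)
    (Labeling.pattern_surjective hm) (Setoid.ext mk_toCycles_eq_mk_toCycles_iff)

theorem card_slot : Nat.card (Slot r n) = ∑ i : Fin r, ((i : ℕ) + 1) * n i := by
  simp [mul_comm]

end CycleTuples

/-- For a partition `ν = (1^{n 0}, 2^{n 1}, …, r^{n (r-1)})`, the dimension of the space of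
`S_m`-invariants in the tensor product `(IE₁^m)^{⊗ n 0} ⊗ ⋯ ⊗ (IE_r^m)^{⊗ n (r-1)}`
(realized as the permutation representation of `S_m` on the product of the corresponding
sets of cycles, with the diagonal action) is constant for `m ≥ |ν| = ∑ (i+1)·(n i)`. -/
theorem dim_invariants_constant (r : ℕ) (n : Fin r → ℕ) (m m' : ℕ)
    (hm : ∑ i : Fin r, ((i : ℕ) + 1) * n i ≤ m) (hm' : ∑ i : Fin r, ((i : ℕ) + 1) * n i ≤ m') :
    Module.finrank ℚ (Representation.ofMulAction ℚ (Equiv.Perm (Fin m))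
        (∀ i : Fin r, Fin (n i) → Cyc ((i : ℕ) + 1) m)).invariants =
      Module.finrank ℚ (Representation.ofMulAction ℚ (Equiv.Perm (Fin m'))
        (∀ i : Fin r, Fin (n i) → Cyc ((i : ℕ) + 1) m')).invariants := by
  rw [Representation.finrank_invariants_ofMulAction, Representation.finrank_invariants_ofMulAction,
    CycleTuples.card_orbits_eq_card_pattern (CycleTuples.card_slot ▸ hm),
    CycleTuples.card_orbits_eq_card_pattern (CycleTuples.card_slot ▸ hm')]
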